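/- Let n agents have additive valuations over a finite set M of items, let α ∈ (0,1], β > 0 and γ ∈ (0,1], and suppose S = (S_1,...,S_n) is a partial allocation of M that is α-EFX, is γ-EF1, and satisfies v_i(S_i) ≥ β·v_i({h}) for every agent i and every item h ∈ M not allocated by S. Then there exists a complete allocation A = (A_1,...,A_n) of M that is simultaneously min(α, β/(β+1))-EFX and γ-EF1. -/
import Mathlib


open Finset

lemma exists_unenvied_perm {n : ℕ} (hn : 1 ≤ n) (v : Fin n → Fin n → ℝ) :
    ∃ σ : Equiv.Perm (Fin n), (∀ i, v i i ≤ v i (σ i)) ∧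
      ∃ i0 : Fin n, ∀ i, v i (σ i0) ≤ v i (σ i) := by
  classical
  obtain ⟨σ, hσP, hσmax⟩ :=
    (univ.filter (fun σ : Equiv.Perm (Fin n) => ∀ i, v i i ≤ v i (σ i))).exists_max_image
      (fun σ => ∑ i, v i (σ i)) ⟨1, by simp⟩
  rw [mem_filter] at hσP
  have hσimp := hσP.2
  refine ⟨σ, hσimp, ?_⟩
  by_contra hno
  push_neg at hno
  choose e he using hno
  -- he : ∀ j, v (e j) (σ (e j)) < v (e j) (σ j)
  obtain ⟨x, hex⟩ : ∃ x : Fin n, ∃ p, 0 < p ∧ e^[p] x = x := by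
    obtain ⟨k, l, hkl, hekl⟩ : ∃ k l : ℕ, k < l ∧ e^[k] (⟨0, hn⟩ : Fin n) = e^[l] ⟨0, hn⟩ := by
      obtain ⟨a, b, hab, hfab⟩ :=
        Finite.exists_ne_map_eq_of_infinite (fun t : ℕ => e^[t] (⟨0, hn⟩ : Fin n))
      rcases hab.lt_or_gt with h' | h'
      exacts [⟨a, b, h', hfab⟩, ⟨b, a, h', hfab.symm⟩]
    refine ⟨e^[k] ⟨0, hn⟩, l - k, Nat.sub_pos_of_lt hkl, ?_⟩
    rw [← Function.iterate_add_apply, Nat.sub_add_cancel hkl.le, ← hekl]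
  obtain ⟨hp0, hpx⟩ := Nat.find_spec hex
  set p := Nat.find hex with hpdef
  have hmin : ∀ q, 0 < q → e^[q] x = x → p ≤ q := fun q h1 h2 => Nat.find_le ⟨h1, h2⟩
  set O : Finset (Fin n) := (Finset.range p).image (fun t => e^[t] x) with hO
  have hmem : ∀ t, t < p → e^[t] x ∈ O := fun t ht => mem_image.mpr ⟨t, mem_range.mpr ht, rfl⟩
  have hxO : x ∈ O := hmem 0 hp0
  have hclosed : ∀ y ∈ O, e y ∈ O := by
    intro y hy
    obtain ⟨t, ht, rfl⟩ := mem_image.mp hy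
    rw [mem_range] at ht
    rw [← Function.iterate_succ_apply' e t x]
    show e^[t+1] x ∈ O
    by_cases h : t + 1 < p
    · exact hmem _ h
    · have ht1 : t + 1 = p := by omega
      rw [ht1, hpx]; exact hxO
  have hinj2 : ∀ s t, s < p → t < p → e^[s+1] x = e^[t+1] x → s = t := by
    have key : ∀ s t, s < t → t < p → e^[s+1] x = e^[t+1] x → False := by
      intro s t hst htp h
      have h2 : e^[p - 1 - t + (s+1)] x = x := by
        have e1 : e^[p-1-t] (e^[s+1] x) = e^[p-1-t] (e^[t+1] x) := by rw [h]
        rw [← Function.iterate_add_apply, ← Function.iterate_add_apply] at e1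
        have hpt : p - 1 - t + (t+1) = p := by omega
        rw [hpt, hpx] at e1
        exact e1
      have := hmin _ (by omega) h2
      omega
    intro s t hs ht h
    rcases lt_trichotomy s t with h' | h' | h'
    · exact (key s t h' ht h).elim
    · exact h'
    · exact (key t s h' hs h.symm).elim
  have hsurjO : ∀ i ∈ O, ∃ y ∈ O, e y = i := by
    intro i hi
    obtain ⟨t, ht, rfl⟩ := mem_image.mp hi
    rw [mem_range] at ht
    rcases Nat.eq_zero_or_pos t with rfl | htpos
    · refine ⟨e^[p-1] x, hmem _ (by omega), ?_⟩
      rw [← Function.iterate_succ_apply' e (p-1) x]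
      show e^[p-1+1] x = e^[0] x
      have hpp : p - 1 + 1 = p := by omega
      rw [hpp, hpx]
      simp
    · refine ⟨e^[t-1] x, hmem _ (by omega), ?_⟩
      rw [← Function.iterate_succ_apply' e (t-1) x]
      show e^[t-1+1] x = e^[t] x
      congr 1
      omega
  set f : Fin n → Fin n := fun y => if y ∈ O then e y else y with hf
  have hfinj : Function.Injective f := by
    intro a b hab
    simp only [hf] at hab
    by_cases ha : a ∈ O <;> by_cases hb : b ∈ O
    · rw [if_pos ha, if_pos hb] at hab
      obtain ⟨s, hs, rfl⟩ := mem_image.mp ha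
      obtain ⟨t, ht, rfl⟩ := mem_image.mp hb
      rw [mem_range] at hs ht
      rw [← Function.iterate_succ_apply' e s x, ← Function.iterate_succ_apply' e t x] at hab
      rw [hinj2 s t hs ht hab]
    · rw [if_pos ha, if_neg hb] at hab
      exact absurd (hab ▸ hclosed a ha) hb
    · rw [if_neg ha, if_pos hb] at hab
      exact absurd (hab.symm ▸ hclosed b hb) ha
    · rwa [if_neg ha, if_neg hb] at hab
  have hfbij : Function.Bijective f := Finite.injective_iff_bijective.mp hfinj
  set F : Equiv.Perm (Fin n) := Equiv.ofBijective f hfbij with hF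
  have hFapp : ∀ y, F y = f y := fun y => rfl
  have hFsymm_not : ∀ i, i ∉ O → F.symm i = i := by
    intro i hi
    have h1 : F i = i := by rw [hFapp, hf]; simp [hi]
    conv_lhs => rw [← h1]
    exact F.symm_apply_apply i
  have hFsymm_mem : ∀ y ∈ O, F.symm (e y) = y := by
    intro y hy
    have h1 : F y = e y := by rw [hFapp, hf]; simp [hy]
    rw [← h1, F.symm_apply_apply]
  set σ' : Equiv.Perm (Fin n) := F.symm.trans σ with hσ'
  have hσ'app : ∀ i, σ' i = σ (F.symm i) := fun i => rfl
  have himp : ∀ i, v i (σ i) ≤ v i (σ' i) ∧ (i ∈ O → v i (σ i) < v i (σ' i)) := by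
    intro i
    by_cases hi : i ∈ O
    · obtain ⟨y, hy, rfl⟩ := hsurjO i hi
      have h1 : σ' (e y) = σ y := by rw [hσ'app, hFsymm_mem y hy]
      have h2 := he y
      rw [h1]
      exact ⟨h2.le, fun _ => h2⟩
    · have h1 : σ' i = σ i := by rw [hσ'app, hFsymm_not i hi]
      rw [h1]
      exact ⟨le_refl _, fun h => absurd h hi⟩
  have hmemP : σ' ∈ univ.filter (fun τ : Equiv.Perm (Fin n) => ∀ i, v i i ≤ v i (τ i)) := by
    rw [mem_filter]
    exact ⟨mem_univ _, fun i => (hσimp i).trans (himp i).1⟩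
  have hlt : ∑ i, v i (σ i) < ∑ i, v i (σ' i) :=
    Finset.sum_lt_sum (fun i _ => (himp i).1) ⟨x, mem_univ x, (himp x).2 hxO⟩
  exact absurd (hσmax σ' hmemP) (not_le.mpr hlt)

/-- The general approximation framework, with the EF1 guarantee: given an `α`-EFX and
`γ`-EF1 partial allocation `S` in which every agent values her own bundle at least `β`
times any unallocated item, there is a complete allocation that is simultaneously
`min α (β/(β+1))`-EFX and `γ`-EF1. -/
theorem framework_efx_ef1 {ι : Type*} [DecidableEq ι] (n : ℕ) (hn : 1 ≤ n)
    (M : Finset ι) (w : Fin n → ι → ℝ)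
    (hw : ∀ i, ∀ g ∈ M, 0 ≤ w i g)
    (α β γ : ℝ) (hα0 : 0 < α) (hα1 : α ≤ 1) (hβ : 0 < β) (hγ0 : 0 < γ) (hγ1 : γ ≤ 1)
    (S : Fin n → Finset ι)
    (hSsub : ∀ i, S i ⊆ M)
    (hSdisj : ∀ i j, i ≠ j → Disjoint (S i) (S j))
    (hSefx : ∀ i j, ∀ g ∈ S j, α * ∑ x ∈ (S j).erase g, w i x ≤ ∑ x ∈ S i, w i x)
    (hSef1 : ∀ i j, ((S j).Nonempty →
        ∃ g ∈ S j, γ * ∑ x ∈ (S j).erase g, w i x ≤ ∑ x ∈ S i, w i x) ∧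
      (S j = ∅ → γ * ∑ x ∈ S j, w i x ≤ ∑ x ∈ S i, w i x))
    (hSval : ∀ i, ∀ h ∈ M, (∀ j, h ∉ S j) → β * w i h ≤ ∑ x ∈ S i, w i x) :
    ∃ A : Fin n → Finset ι,
      (∀ i, A i ⊆ M) ∧
      (∀ g ∈ M, ∃ i, g ∈ A i) ∧
      (∀ i j, i ≠ j → Disjoint (A i) (A j)) ∧
      (∀ i j, ∀ g ∈ A j,
        min α (β / (β + 1)) * ∑ x ∈ (A j).erase g, w i x ≤ ∑ x ∈ A i, w i x) ∧
      (∀ i j, ((A j).Nonempty →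
          ∃ g ∈ A j, γ * ∑ x ∈ (A j).erase g, w i x ≤ ∑ x ∈ A i, w i x) ∧
        (A j = ∅ → γ * ∑ x ∈ A j, w i x ≤ ∑ x ∈ A i, w i x)) := by
  classical
  set c := min α (β / (β + 1)) with hcdef
  have hβ1 : (0:ℝ) < β + 1 := by linarith
  have hc1 : c ≤ 1 := le_trans (min_le_left _ _) hα1
  have hcβ : c ≤ β / (β + 1) := min_le_right _ _
  have hcα : c ≤ α := min_le_left _ _
  have hnn : ∀ (i : Fin n) (T : Finset ι), T ⊆ M → (0:ℝ) ≤ ∑ x ∈ T, w i x :=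
    fun i T hT => Finset.sum_nonneg (fun x hx => hw i x (hT hx))
  have key : ∀ k (A : Fin n → Finset ι),
      (∀ i, A i ⊆ M) →
      (∀ i j, i ≠ j → Disjoint (A i) (A j)) →
      (∀ g, (∀ j, g ∉ A j) → (∀ j, g ∉ S j)) →
      (∀ i, ∑ x ∈ S i, w i x ≤ ∑ x ∈ A i, w i x) →
      (∀ i j, ∀ g ∈ A j, c * ∑ x ∈ (A j).erase g, w i x ≤ ∑ x ∈ A i, w i x) →
      (∀ i j, (A j).Nonempty → ∃ g ∈ A j, γ * ∑ x ∈ (A j).erase g, w i x ≤ ∑ x ∈ A i, w i x) →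
      (M \ univ.biUnion A).card ≤ k →
      ∃ B : Fin n → Finset ι, (∀ i, B i ⊆ M) ∧ (∀ g ∈ M, ∃ i, g ∈ B i) ∧
        (∀ i j, i ≠ j → Disjoint (B i) (B j)) ∧
        (∀ i j, ∀ g ∈ B j, c * ∑ x ∈ (B j).erase g, w i x ≤ ∑ x ∈ B i, w i x) ∧
        (∀ i j, (B j).Nonempty →
          ∃ g ∈ B j, γ * ∑ x ∈ (B j).erase g, w i x ≤ ∑ x ∈ B i, w i x) := by
    intro k
    induction k with
    | zero =>
      intro A h1 h2 h3 h4 h5 h6 hcard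
      refine ⟨A, h1, ?_, h2, h5, h6⟩
      intro g hg
      by_contra hgn
      push_neg at hgn
      have hmem : g ∈ M \ univ.biUnion A := by
        rw [mem_sdiff, mem_biUnion]
        exact ⟨hg, by push_neg; intro j _; exact hgn j⟩
      have := card_pos.mpr ⟨g, hmem⟩
      omega
    | succ k ih =>
      intro A h1 h2 h3 h4 h5 h6 hcard
      rcases eq_empty_or_nonempty (M \ univ.biUnion A) with hemp | ⟨h, hh⟩
      · exact ih A h1 h2 h3 h4 h5 h6 (by rw [hemp]; simp)
      rw [mem_sdiff, mem_biUnion] at hh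
      obtain ⟨hhM, hhA'⟩ := hh
      push_neg at hhA'
      have hhA : ∀ j, h ∉ A j := fun j => hhA' j (mem_univ j)
      obtain ⟨σ, hσimp, i0, hi0⟩ := exists_unenvied_perm hn (fun i j => ∑ x ∈ A j, w i x)
      set B : Fin n → Finset ι := fun j => if j = i0 then insert h (A (σ i0)) else A (σ j)
        with hBdef
      have hwh : ∀ i, 0 ≤ w i h := fun i => hw i h hhM
      have hBi0 : B i0 = insert h (A (σ i0)) := if_pos rfl
      have hBne : ∀ j, j ≠ i0 → B j = A (σ j) := fun j hj => if_neg hj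
      have hBsup : ∀ j, A (σ j) ⊆ B j := by
        intro j
        by_cases hj : j = i0
        · subst hj; rw [hBi0]; exact subset_insert _ _
        · rw [hBne j hj]
      have hBsub : ∀ j, B j ⊆ M := by
        intro j
        by_cases hj : j = i0
        · subst hj; rw [hBi0]; exact insert_subset hhM (h1 _)
        · rw [hBne j hj]; exact h1 _
      have hBge : ∀ i, ∑ x ∈ A (σ i), w i x ≤ ∑ x ∈ B i, w i x := by
        intro i
        by_cases hi : i = i0
        · subst hi
          rw [hBi0, sum_insert (hhA _)]
          linarith [hwh i]
        · rw [hBne i hi]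
      have hSleB : ∀ i, ∑ x ∈ S i, w i x ≤ ∑ x ∈ B i, w i x :=
        fun i => le_trans (h4 i) (le_trans (hσimp i) (hBge i))
      have hhS : ∀ j, h ∉ S j := h3 h hhA
      have hβh : ∀ i, β * w i h ≤ ∑ x ∈ A (σ i), w i x :=
        fun i => le_trans (hSval i h hhM hhS) (le_trans (h4 i) (hσimp i))
      have hBdisj : ∀ i j, i ≠ j → Disjoint (B i) (B j) := by
        intro i j hij
        have hσne : σ i ≠ σ j := fun hc => hij (σ.injective hc)
        by_cases hi : i = i0
        · subst hi
          rw [hBi0, hBne j (Ne.symm hij), disjoint_insert_left]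
          exact ⟨hhA _, h2 _ _ hσne⟩
        · by_cases hj : j = i0
          · subst hj
            rw [hBi0, hBne i hi, disjoint_insert_right]
            exact ⟨hhA _, h2 _ _ hσne⟩
          · rw [hBne i hi, hBne j hj]
            exact h2 _ _ hσne
      have hBmemA : ∀ g j, g ∈ A j → ∃ j', g ∈ B j' := by
        intro g j hg
        refine ⟨σ.symm j, hBsup (σ.symm j) ?_⟩
        rwa [Equiv.apply_symm_apply]
      have hBcov : ∀ g, (∀ j, g ∉ B j) → (∀ j, g ∉ A j) := by
        intro g hg j hgA
        obtain ⟨j', hj'⟩ := hBmemA g j hgA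
        exact hg j' hj'
      have hBunalloc : ∀ g, (∀ j, g ∉ B j) → (∀ j, g ∉ S j) :=
        fun g hg => h3 g (hBcov g hg)
      -- EFX invariant for B
      have hBefx : ∀ i j, ∀ g ∈ B j, c * ∑ x ∈ (B j).erase g, w i x ≤ ∑ x ∈ B i, w i x := by
        intro i j g hg
        by_cases hj : j = i0
        · subst hj
          rw [hBi0] at hg ⊢
          have hhT : h ∉ A (σ j) := hhA _
          by_cases hgh : g = h
          · subst hgh
            rw [erase_insert hhT]
            have hTV : ∑ x ∈ A (σ j), w i x ≤ ∑ x ∈ A (σ i), w i x := hi0 i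
            have h0 : (0:ℝ) ≤ ∑ x ∈ A (σ j), w i x := hnn i _ (h1 _)
            nlinarith [hBge i, hc1]
          · have hgT : g ∈ A (σ j) := mem_of_mem_insert_of_ne hg hgh
            rw [erase_insert_of_ne (Ne.symm hgh),
              sum_insert (fun hc => hhT (mem_of_mem_erase hc))]
            have hTV : ∑ x ∈ (A (σ j)).erase g, w i x ≤ ∑ x ∈ A (σ i), w i x := by
              refine le_trans ?_ (hi0 i)
              exact sum_le_sum_of_subset_of_nonneg (erase_subset g _)
                (fun x hx _ => hw i x (h1 _ hx))
            have hhV : β * w i h ≤ ∑ x ∈ A (σ i), w i x := hβh i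
            have herasenn : (0:ℝ) ≤ ∑ x ∈ (A (σ j)).erase g, w i x :=
              hnn i _ (fun x hx => h1 _ (mem_of_mem_erase hx))
            have hs0 : (0:ℝ) ≤ w i h + ∑ x ∈ (A (σ j)).erase g, w i x :=
              add_nonneg (hwh i) herasenn
            have step1 : c * (w i h + ∑ x ∈ (A (σ j)).erase g, w i x) ≤
                (β / (β + 1)) * (w i h + ∑ x ∈ (A (σ j)).erase g, w i x) :=
              mul_le_mul_of_nonneg_right hcβ hs0
            have step2 : (β / (β + 1)) * (w i h + ∑ x ∈ (A (σ j)).erase g, w i x) ≤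
                ∑ x ∈ A (σ i), w i x := by
              rw [div_mul_eq_mul_div, div_le_iff₀ hβ1]
              have hb1 : β * ∑ x ∈ (A (σ j)).erase g, w i x ≤
                  β * ∑ x ∈ A (σ i), w i x := mul_le_mul_of_nonneg_left hTV hβ.le
              nlinarith
            linarith [hBge i]
        · rw [hBne j hj] at hg ⊢
          exact le_trans (h5 i (σ j) g hg) (le_trans (hσimp i) (hBge i))
      -- EF1 invariant for B
      have hBef1 : ∀ i j, (B j).Nonempty →
          ∃ g ∈ B j, γ * ∑ x ∈ (B j).erase g, w i x ≤ ∑ x ∈ B i, w i x := by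
        intro i j hne
        by_cases hj : j = i0
        · subst hj
          refine ⟨h, by rw [hBi0]; exact mem_insert_self _ _, ?_⟩
          rw [hBi0, erase_insert (hhA _)]
          have h0 : (0:ℝ) ≤ ∑ x ∈ A (σ j), w i x := hnn i _ (h1 _)
          nlinarith [hi0 i, hBge i, hγ1]
        · rw [hBne j hj] at hne ⊢
          obtain ⟨g, hg, hgle⟩ := h6 i (σ j) hne
          exact ⟨g, hg, le_trans hgle (le_trans (hσimp i) (hBge i))⟩
      -- pool decreases
      have hBi0h : h ∈ B i0 := by rw [hBi0]; exact mem_insert_self _ _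
      have hpool : M \ univ.biUnion B = (M \ univ.biUnion A).erase h := by
        ext g
        simp only [mem_erase, mem_sdiff, mem_biUnion, mem_univ, true_and]
        constructor
        · rintro ⟨hgM, hgB⟩
          push_neg at hgB
          refine ⟨fun hc => hgB i0 (hc ▸ hBi0h), hgM, ?_⟩
          push_neg
          exact hBcov g hgB
        · rintro ⟨hgh, hgM, hgA⟩
          push_neg at hgA
          refine ⟨hgM, ?_⟩
          push_neg
          intro j hgBj
          by_cases hj : j = i0
          · subst hj
            rw [hBi0] at hgBj
            rcases mem_insert.mp hgBj with rfl | hc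
            · exact hgh rfl
            · exact hgA _ hc
          · rw [hBne j hj] at hgBj
            exact hgA _ hgBj
      have hcardB : (M \ univ.biUnion B).card ≤ k := by
        rw [hpool]
        have hhP : h ∈ M \ univ.biUnion A := by
          rw [mem_sdiff, mem_biUnion]
          push_neg
          exact ⟨hhM, fun j _ => hhA j⟩
        have h1' := card_erase_of_mem hhP
        have h2' := card_pos.mpr ⟨h, hhP⟩
        omega
      exact ih B hBsub hBdisj hBunalloc hSleB hBefx hBef1 hcardB
  obtain ⟨B, hB1, hB2, hB3, hB4, hB5⟩ := key (M \ univ.biUnion S).card S hSsub hSdisj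
    (fun g hg => hg)
    (fun i => le_refl _)
    (by
      intro i j g hg
      have hnn' : (0:ℝ) ≤ ∑ x ∈ (S j).erase g, w i x :=
        hnn i _ (fun x hx => hSsub j (mem_of_mem_erase hx))
      calc c * ∑ x ∈ (S j).erase g, w i x ≤ α * ∑ x ∈ (S j).erase g, w i x :=
            mul_le_mul_of_nonneg_right hcα hnn'
        _ ≤ ∑ x ∈ S i, w i x := hSefx i j g hg)
    (fun i j hne => (hSef1 i j).1 hne)
    (le_refl _)
  refine ⟨B, hB1, hB2, hB3, hB4, fun i j => ⟨hB5 i j, ?_⟩⟩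
  intro hBj
  rw [hBj]
  simpa using hnn i (B i) (hB1 i)
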